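/- arXiv:2212.14030 — 7 statements merged into one kernel-verified Lean document; each statement's English description precedes it below -/
import Mathlib

section
/- Let n be a finite (decidable-equality) index type, let V and W be n×n complex matrices belonging to the unitary group (V·Vᴴ = 1 = Vᴴ·V and likewise for W), let σ : n → ℝ, and let S be the complex diagonal matrix with (real) diagonal entries σ. Set A = V · S · Wᴴ, and define the (n ⊕ n)×(n ⊕ n) block matrix U = (1/√2) • fromBlocks(Vᴴ, Wᴴ, Vᴴ, −Wᴴ). Then U is unitary (U·Uᴴ = 1 = Uᴴ·U), and U · fromBlocks(0, A, Aᴴ, 0) · Uᴴ = fromBlocks(S, 0, 0, −S). -/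
open Matrix

/-- SVD-based diagonalization: if `A = V S Wᴴ` with `V, W` unitary and `S` a real diagonal
matrix, then the block unitary `U = (1/√2) • fromBlocks Vᴴ Wᴴ Vᴴ (-Wᴴ)` is unitary and
conjugates `fromBlocks 0 A Aᴴ 0` to the diagonal `fromBlocks S 0 0 (-S)`. -/
theorem svd_block_diagonalization {n : Type*} [Fintype n] [DecidableEq n]
    (V W : Matrix n n ℂ)
    (hV : V * Vᴴ = 1 ∧ Vᴴ * V = 1) (hW : W * Wᴴ = 1 ∧ Wᴴ * W = 1)
    (σ : n → ℝ)
    (S : Matrix n n ℂ) (hS : S = Matrix.diagonal fun i => (σ i : ℂ))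
    (A : Matrix n n ℂ) (hA : A = V * S * Wᴴ)
    (U : Matrix (n ⊕ n) (n ⊕ n) ℂ)
    (hU : U = (Real.sqrt 2 : ℂ)⁻¹ • Matrix.fromBlocks Vᴴ Wᴴ Vᴴ (-Wᴴ)) :
    (U * Uᴴ = 1 ∧ Uᴴ * U = 1) ∧
      U * Matrix.fromBlocks 0 A Aᴴ 0 * Uᴴ = Matrix.fromBlocks S 0 0 (-S) := by
  obtain ⟨hV1, hV2⟩ := hV
  obtain ⟨hW1, hW2⟩ := hW
  have hSH : Sᴴ = S := by
    subst hS
    rw [Matrix.diagonal_conjTranspose]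
    ext i j
    simp [Matrix.diagonal_apply]
  have hAH : Aᴴ = W * S * Vᴴ := by
    subst hA
    simp [Matrix.conjTranspose_mul, hSH, mul_assoc]
  have h2 : ((Real.sqrt 2 : ℂ))⁻¹ ≠ 0 := by
    simp only [ne_eq, inv_eq_zero, Complex.ofReal_eq_zero]
    positivity
  have hcc : (starRingEnd ℂ) ((Real.sqrt 2 : ℂ))⁻¹ = ((Real.sqrt 2 : ℂ))⁻¹ := by
    rw [map_inv₀, Complex.conj_ofReal]
  have hsq : ((Real.sqrt 2 : ℂ))⁻¹ * ((Real.sqrt 2 : ℂ))⁻¹ = (2 : ℂ)⁻¹ := by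
    rw [← mul_inv, ← Complex.ofReal_mul, Real.mul_self_sqrt (by norm_num)]; norm_num
  subst hU
  have hVA : Vᴴ * A = S * Wᴴ := by
    rw [hA, ← mul_assoc, ← mul_assoc, hV2, one_mul]
  have hWA : Wᴴ * Aᴴ = S * Vᴴ := by
    rw [hAH, ← mul_assoc, ← mul_assoc, hW2, one_mul]
  have hs1 : ((Real.sqrt 2 : ℂ))⁻¹ * star ((Real.sqrt 2 : ℂ))⁻¹ = (2:ℂ)⁻¹ := by
    rw [Complex.star_def, hcc, hsq]
  have hs2 : star ((Real.sqrt 2 : ℂ))⁻¹ * ((Real.sqrt 2 : ℂ))⁻¹ = (2:ℂ)⁻¹ := by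
    rw [Complex.star_def, hcc, hsq]
  have hone : ((2:ℂ))⁻¹ • ((2:ℂ) • (1 : Matrix n n ℂ)) = 1 := by
    rw [smul_smul]; norm_num
  have hSS : ((2:ℂ))⁻¹ • ((2:ℂ) • S) = S := by
    rw [smul_smul]; norm_num
  refine ⟨⟨?_, ?_⟩, ?_⟩
  · simp only [conjTranspose_smul, fromBlocks_conjTranspose, conjTranspose_neg,
      conjTranspose_conjTranspose, smul_mul_smul_comm, hcc, hsq,
      Matrix.fromBlocks_multiply, hV2, hW2, Matrix.mul_neg, Matrix.neg_mul, neg_neg,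
      add_neg_cancel, ← two_smul ℂ (1 : Matrix n n ℂ)]
    rw [hs1, Matrix.fromBlocks_smul, hone, smul_zero]
    exact Matrix.fromBlocks_one
  · simp only [conjTranspose_smul, fromBlocks_conjTranspose, conjTranspose_neg,
      conjTranspose_conjTranspose, smul_mul_smul_comm, hcc, hsq,
      Matrix.fromBlocks_multiply, hV1, hW1, Matrix.mul_neg, Matrix.neg_mul, neg_neg,
      add_neg_cancel, ← two_smul ℂ (1 : Matrix n n ℂ)]
    rw [hs2, Matrix.fromBlocks_smul, hone, smul_zero]
    exact Matrix.fromBlocks_one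
  · simp only [conjTranspose_smul, fromBlocks_conjTranspose, conjTranspose_neg,
      conjTranspose_conjTranspose, Matrix.smul_mul, Matrix.mul_smul, hcc, smul_smul, hsq,
      Matrix.fromBlocks_multiply, Matrix.zero_mul, Matrix.mul_zero, zero_add, add_zero,
      Matrix.neg_mul, Matrix.mul_neg, neg_neg, hVA, hWA, Matrix.mul_assoc, hV2, hW2,
      Matrix.mul_one, ← two_smul ℂ S, neg_add_rev, ← two_smul ℂ (-S)]
    rw [hs2, add_neg_cancel, neg_add_cancel, Matrix.fromBlocks_smul, smul_zero, hSS,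
      smul_neg, smul_neg, hSS]
end

section
/- Let H be a complex Hilbert space (a complete inner product space over ℂ) and let A : H →L[ℂ] H be a continuous linear operator satisfying A ∘ A = 0. Then ‖A + A†‖ = ‖A‖ and ‖A − A†‖ = ‖A‖, where A† denotes the Hilbert-space adjoint of A; in particular both operator norms are bounded above by max(‖A‖, ‖A†‖). -/
/-!
Since `A² = 0`, the vectors `A x` and `A† x` are orthogonal (`⟪A x, A† x⟫ = ⟪A² x, x⟫`), so
`‖(A ± A†) x‖² = ‖A x‖² + ‖A† x‖² ≥ ‖A x‖²`. Conversely, split `x = y + z` with `y ∈ ker A` and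
`z ⊥ ker A`. Then `A† z = 0`, because `A A† z ∈ ker A`, so `A x = A z`, `A† x = A† y` and
`‖A x‖² + ‖A† x‖² ≤ ‖A‖² (‖z‖² + ‖y‖²) = ‖A‖² ‖x‖²`.
-/

open scoped InnerProductSpace

namespace ContinuousLinearMap

variable {𝕜 E : Type*} [RCLike 𝕜] [NormedAddCommGroup E] [InnerProductSpace 𝕜 E] [CompleteSpace E]
  {A : E →L[𝕜] E}

theorem inner_apply_adjoint_apply_of_comp_self_eq_zero (hA : A ∘L A = 0) (x : E) :
    ⟪A x, adjoint A x⟫_𝕜 = 0 := by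
  rw [adjoint_inner_right, ← comp_apply, hA, zero_apply, inner_zero_left]

theorem adjoint_apply_eq_zero_of_mem_ker_orthogonal (hA : A ∘L A = 0) {z : E}
    (hz : z ∈ (LinearMap.ker (A : E →ₗ[𝕜] E))ᗮ) : adjoint A z = 0 := by
  rw [← inner_self_eq_zero (𝕜 := 𝕜), adjoint_inner_left]
  exact inner_eq_zero_symm.mp <| hz _ <| DFunLike.congr_fun hA _

theorem norm_add_adjoint_apply_sq (hA : A ∘L A = 0) (x : E) :
    ‖(A + adjoint A) x‖ ^ 2 = ‖A x‖ ^ 2 + ‖adjoint A x‖ ^ 2 := by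
  rw [add_apply, @norm_add_sq 𝕜, inner_apply_adjoint_apply_of_comp_self_eq_zero hA,
    map_zero, mul_zero, add_zero]

theorem norm_sub_adjoint_apply_sq (hA : A ∘L A = 0) (x : E) :
    ‖(A - adjoint A) x‖ ^ 2 = ‖A x‖ ^ 2 + ‖adjoint A x‖ ^ 2 := by
  rw [sub_apply, @norm_sub_sq 𝕜, inner_apply_adjoint_apply_of_comp_self_eq_zero hA,
    map_zero, mul_zero, sub_zero]

theorem norm_apply_sq_add_norm_adjoint_apply_sq_le (hA : A ∘L A = 0) (x : E) :
    ‖A x‖ ^ 2 + ‖adjoint A x‖ ^ 2 ≤ ‖A‖ ^ 2 * ‖x‖ ^ 2 := by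
  obtain ⟨y, hy, z, hz, rfl⟩ := (LinearMap.ker (A : E →ₗ[𝕜] E)).exists_add_mem_mem_orthogonal x
  have hAy : A y = 0 := hy
  have hAz : adjoint A z = 0 := adjoint_apply_eq_zero_of_mem_ker_orthogonal hA hz
  have hyz : ‖y + z‖ ^ 2 = ‖y‖ ^ 2 + ‖z‖ ^ 2 := by
    rw [@norm_add_sq 𝕜, hz y hy, map_zero, mul_zero, add_zero]
  calc ‖A (y + z)‖ ^ 2 + ‖adjoint A (y + z)‖ ^ 2 = ‖A z‖ ^ 2 + ‖adjoint A y‖ ^ 2 := by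
        simp [hAy, hAz]
    _ ≤ (‖A‖ * ‖z‖) ^ 2 + (‖adjoint A‖ * ‖y‖) ^ 2 := by
        gcongr <;> apply le_opNorm
    _ = ‖A‖ ^ 2 * ‖y + z‖ ^ 2 := by
        rw [LinearIsometryEquiv.norm_map, hyz]; ring

theorem opNorm_eq_of_norm_apply_sq_eq (hA : A ∘L A = 0) {B : E →L[𝕜] E}
    (hB : ∀ x, ‖B x‖ ^ 2 = ‖A x‖ ^ 2 + ‖adjoint A x‖ ^ 2) : ‖B‖ = ‖A‖ := by
  apply le_antisymm
  · refine opNorm_le_bound _ (norm_nonneg A) fun x ↦ ?_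
    rw [← pow_le_pow_iff_left₀ (norm_nonneg _) (by positivity) two_ne_zero, mul_pow, hB]
    exact norm_apply_sq_add_norm_adjoint_apply_sq_le hA x
  · refine opNorm_le_bound _ (norm_nonneg B) fun x ↦ (le_opNorm B x).trans' ?_
    rw [← pow_le_pow_iff_left₀ (norm_nonneg _) (norm_nonneg _) two_ne_zero, hB]
    exact le_add_of_nonneg_right (sq_nonneg _)

end ContinuousLinearMap

/-- If a bounded operator `A` on a complex Hilbert space satisfies `A ∘ A = 0`, then
`‖A + A†‖ = ‖A‖` and `‖A − A†‖ = ‖A‖`; in particular both norms are bounded above by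
`max ‖A‖ ‖A†‖`. -/
theorem norm_add_adjoint_of_sq_eq_zero {H : Type*} [NormedAddCommGroup H]
    [InnerProductSpace ℂ H] [CompleteSpace H]
    (A : H →L[ℂ] H) (hA : A ∘L A = 0) :
    ‖A + ContinuousLinearMap.adjoint A‖ = ‖A‖ ∧
    ‖A - ContinuousLinearMap.adjoint A‖ = ‖A‖ ∧
    ‖A + ContinuousLinearMap.adjoint A‖ ≤ max ‖A‖ ‖ContinuousLinearMap.adjoint A‖ ∧
    ‖A - ContinuousLinearMap.adjoint A‖ ≤ max ‖A‖ ‖ContinuousLinearMap.adjoint A‖ := by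
  have hadd := ContinuousLinearMap.opNorm_eq_of_norm_apply_sq_eq hA
    (ContinuousLinearMap.norm_add_adjoint_apply_sq hA)
  have hsub := ContinuousLinearMap.opNorm_eq_of_norm_apply_sq_eq hA
    (ContinuousLinearMap.norm_sub_adjoint_apply_sq hA)
  exact ⟨hadd, hsub, hadd ▸ le_max_left _ _, hsub ▸ le_max_left _ _⟩
end

section
/- Let H be a complex Hilbert space (a complete inner product space over ℂ) and let P, Q : H →L[ℂ] H be positive operators (each is self-adjoint and satisfies ⟨P x, x⟩ ≥ 0 and ⟨Q x, x⟩ ≥ 0 for all x) with P ∘ Q = 0. Then ‖P + Q‖ = max(‖P‖, ‖Q‖). -/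
open scoped ComplexOrder

theorem norm_add_of_positive_of_comp_eq_zero_general {H : Type*} [NormedAddCommGroup H]
    [InnerProductSpace ℂ H] [CompleteSpace H]
    (P Q : H →L[ℂ] H)
    (hP : IsSelfAdjoint P) (hQ : IsSelfAdjoint Q)
    (hPQ : P ∘L Q = 0) :
    ‖P + Q‖ = max ‖P‖ ‖Q‖ :=
  hP.norm_add_eq_max hQ hPQ

/-- If `P` and `Q` are positive operators on a complex Hilbert space with `P ∘ Q = 0`,
then `‖P + Q‖ = max ‖P‖ ‖Q‖`. -/
theorem norm_add_of_positive_of_comp_eq_zero {H : Type*} [NormedAddCommGroup H]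
    [InnerProductSpace ℂ H] [CompleteSpace H]
    (P Q : H →L[ℂ] H)
    (hP : IsSelfAdjoint P) (hQ : IsSelfAdjoint Q)
    (hPpos : ∀ x : H, 0 ≤ (inner ℂ (P x) x : ℂ))
    (hQpos : ∀ x : H, 0 ≤ (inner ℂ (Q x) x : ℂ))
    (hPQ : P ∘L Q = 0) :
    ‖P + Q‖ = max ‖P‖ ‖Q‖ :=
  norm_add_of_positive_of_comp_eq_zero_general P Q hP hQ hPQ
end

section
/- Let g > 0 be real and let y : ℕ → ℝ satisfy the Newton recurrence y(n+1) = y(n)·(3 − y(n)²·g)/2 for all n. Define the relative errors δ(n) = y(n)·√g − 1. If |δ(0)| ≤ 1/2, then for every n one has |δ(n)| ≤ 1/2 and |δ(n)| ≤ (1/2)·(2·|δ(0)|)^(2^n); in particular the iteration converges quadratically to g^{-1/2}. -/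
/-- Quadratic convergence of the Newton iteration for the inverse square root:
if `|δ 0| ≤ 1/2` then `|δ n| ≤ 1/2` and `|δ n| ≤ (1/2)·(2|δ 0|)^(2^n)` for all `n`. -/
theorem newton_quadratic_convergence (g : ℝ) (hg : 0 < g) (y : ℕ → ℝ)
    (hrec : ∀ n, y (n + 1) = y n * (3 - (y n) ^ 2 * g) / 2)
    (δ : ℕ → ℝ) (hδ : ∀ n, δ n = y n * Real.sqrt g - 1)
    (h0 : |δ 0| ≤ 1 / 2) :
    ∀ n, |δ n| ≤ 1 / 2 ∧ |δ n| ≤ (1 / 2) * (2 * |δ 0|) ^ (2 ^ n) := by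
  have hs : Real.sqrt g ^ 2 = g := Real.sq_sqrt hg.le
  have key : ∀ n, δ (n + 1) = -(3/2) * δ n ^ 2 - (1/2) * δ n ^ 3 := by
    intro n
    have h1 := hδ n
    have h2 := hδ (n + 1)
    rw [hrec n] at h2
    have hy : y n * Real.sqrt g = δ n + 1 := by linarith
    rw [h2, show y n ^ 2 * g = (y n * Real.sqrt g) ^ 2 by rw [mul_pow, hs]]
    linear_combination (3/2 - ((y n * Real.sqrt g) ^ 2
      + (y n * Real.sqrt g) * (δ n + 1) + (δ n + 1) ^ 2) / 2) * hy
  intro n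
  induction n with
  | zero =>
    refine ⟨h0, ?_⟩
    have := abs_nonneg (δ 0)
    norm_num
    linarith
  | succ n ih =>
    obtain ⟨ih1, ih2⟩ := ih
    have habs : |δ (n + 1)| ≤ 2 * δ n ^ 2 := by
      rw [key n]
      have h := abs_le.mp ih1
      rw [abs_le]
      constructor <;> nlinarith [sq_nonneg (δ n), sq_nonneg (δ n + 1)]
    have hsq : δ n ^ 2 = |δ n| ^ 2 := (sq_abs (δ n)).symm
    have hpos : (0:ℝ) ≤ (1/2) * (2 * |δ 0|) ^ (2 ^ n) := by
      positivity
    have hb : 2 * δ n ^ 2 ≤ (1/2) * (2 * |δ 0|) ^ (2 ^ (n + 1)) := by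
      have : |δ n| ^ 2 ≤ ((1/2) * (2 * |δ 0|) ^ (2 ^ n)) ^ 2 :=
        pow_le_pow_left₀ (abs_nonneg _) ih2 2
      calc 2 * δ n ^ 2 = 2 * |δ n| ^ 2 := by rw [hsq]
        _ ≤ 2 * ((1/2) * (2 * |δ 0|) ^ (2 ^ n)) ^ 2 := by linarith
        _ = (1/2) * (2 * |δ 0|) ^ (2 ^ (n + 1)) := by
            rw [pow_succ 2 n, pow_mul]; ring
    constructor
    · have : 2 * δ n ^ 2 ≤ 1 / 2 := by rw [hsq]; nlinarith [abs_nonneg (δ n)]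
      linarith
    · linarith
end

section
/- Let g > 0 be real and let y be a real number with 0 ≤ y and y²·g ≤ 3. Then 0 ≤ y·(3 − y²·g)/2 ≤ 1/√g. In particular, the interval [0, g^{-1/2}] is invariant under the Newton iteration map N_g, and the first Newton iterate of any initial value y₀ ≥ 0 with (1/2) ≤ y₀²·g ≤ 2 lies in [0, g^{-1/2}]. -/
lemma newton_main (g : ℝ) (hg : 0 < g) (y : ℝ) (hy : 0 ≤ y) (h3 : y ^ 2 * g ≤ 3) :
    0 ≤ y * (3 - y ^ 2 * g) / 2 ∧ y * (3 - y ^ 2 * g) / 2 ≤ 1 / Real.sqrt g := by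
  have hs : 0 < Real.sqrt g := Real.sqrt_pos.mpr hg
  have hsq : Real.sqrt g ^ 2 = g := Real.sq_sqrt hg.le
  constructor
  · have : 0 ≤ 3 - y ^ 2 * g := by linarith
    positivity
  · rw [le_div_iff₀ hs]
    set t := y * Real.sqrt g with ht
    have ht0 : 0 ≤ t := mul_nonneg hy hs.le
    have key : 2 - t * (3 - t ^ 2) = (t - 1) ^ 2 * (t + 2) := by ring
    have hfac : 0 ≤ (t - 1) ^ 2 * (t + 2) := mul_nonneg (sq_nonneg _) (by linarith)
    have heq : y * (3 - y ^ 2 * g) / 2 * Real.sqrt g = t * (3 - t ^ 2) / 2 := by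
      have hg2 : y ^ 2 * g = t ^ 2 := by rw [ht, mul_pow, hsq]
      rw [hg2, ht]; ring
    linarith [heq, key, hfac]

/-- For `g > 0`, if `0 ≤ y` and `y²g ≤ 3` then `0 ≤ N_g(y) ≤ 1/√g` where
`N_g(y) = y(3 − y²g)/2`.  In particular the interval `[0, g^{-1/2}]` is invariant under
`N_g`, and the first Newton iterate of any `y₀ ≥ 0` with `1/2 ≤ y₀²g ≤ 2` lies in
`[0, g^{-1/2}]`. -/
theorem newton_interval_invariance (g : ℝ) (hg : 0 < g) :
    (∀ y : ℝ, 0 ≤ y → y ^ 2 * g ≤ 3 →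
      0 ≤ y * (3 - y ^ 2 * g) / 2 ∧ y * (3 - y ^ 2 * g) / 2 ≤ 1 / Real.sqrt g) ∧
    (∀ y : ℝ, y ∈ Set.Icc (0 : ℝ) (1 / Real.sqrt g) →
      y * (3 - y ^ 2 * g) / 2 ∈ Set.Icc (0 : ℝ) (1 / Real.sqrt g)) ∧
    (∀ y₀ : ℝ, 0 ≤ y₀ → 1 / 2 ≤ y₀ ^ 2 * g → y₀ ^ 2 * g ≤ 2 →
      y₀ * (3 - y₀ ^ 2 * g) / 2 ∈ Set.Icc (0 : ℝ) (1 / Real.sqrt g)) := by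
  have hs : 0 < Real.sqrt g := Real.sqrt_pos.mpr hg
  have hsq : Real.sqrt g ^ 2 = g := Real.sq_sqrt hg.le
  refine ⟨fun y hy h3 => newton_main g hg y hy h3, ?_, ?_⟩
  · rintro y ⟨hy0, hy1⟩
    have h3 : y ^ 2 * g ≤ 3 := by
      have : y * Real.sqrt g ≤ 1 := by
        rw [le_div_iff₀ hs] at hy1; linarith
      nlinarith [mul_nonneg hy0 hs.le]
    exact newton_main g hg y hy0 h3
  · intro y₀ hy0 _ h2
    exact newton_main g hg y₀ hy0 (by linarith)
end

section
/- Let g > 0 and ξ ≥ 0 be real, let n be a natural number, and let y, ỹ : ℕ → ℝ be sequences with ỹ(0) = y(0) such that for every k < n: y(k+1) = N_g(y(k)) and |ỹ(k+1) − N_g(ỹ(k))| ≤ ξ, and such that for every k ≤ n: 0 ≤ y(k), y(k)²·g ≤ 2, 0 ≤ ỹ(k), and ỹ(k)²·g ≤ 2. Then |y(n) − ỹ(n)| ≤ 2·ξ·((3/2)^n − 1). In particular, with per-step truncation error ξ = 2^(1−m) from m-bit fixed-precision arithmetic, the accumulated deviation of the truncated Newton iterates from the exact ones is at most 2^(2−m)·((3/2)^n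 − 1). -/
lemma newton_lipschitz (g a b : ℝ) (hg : 0 < g) (ha : 0 ≤ a) (ha2 : a ^ 2 * g ≤ 2)
    (hb : 0 ≤ b) (hb2 : b ^ 2 * g ≤ 2) :
    |a * (3 - a ^ 2 * g) / 2 - b * (3 - b ^ 2 * g) / 2| ≤ 3 / 2 * |a - b| := by
  have key : a * (3 - a ^ 2 * g) / 2 - b * (3 - b ^ 2 * g) / 2
      = (a - b) * (3 - (a ^ 2 + a * b + b ^ 2) * g) / 2 := by ring
  rw [key]
  have hab : 0 ≤ a * b * g := by positivity
  have h1 : 0 ≤ (a ^ 2 + a * b + b ^ 2) * g := by positivity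
  have h2 : (a ^ 2 + a * b + b ^ 2) * g ≤ 6 := by
    have hab2 : a * b * g ≤ 2 := by
      nlinarith [sq_nonneg (a - b), mul_pos hg hg]
    nlinarith
  have h3 : |3 - (a ^ 2 + a * b + b ^ 2) * g| ≤ 3 := by
    rw [abs_le]; constructor <;> nlinarith
  rw [abs_div, abs_mul]
  have : |a - b| * |3 - (a ^ 2 + a * b + b ^ 2) * g| ≤ |a - b| * 3 :=
    mul_le_mul_of_nonneg_left h3 (abs_nonneg _)
  rw [abs_of_pos (by norm_num : (0:ℝ) < 2)]
  linarith

/-- Error accumulation in fixed-precision Newton iteration: if `ỹ` deviates from an exact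
Newton step by at most `ξ` at each of the first `n` stages, and both sequences stay in the
region `{y ≥ 0 : y²g ≤ 2}`, then `|y n − ỹ n| ≤ 2ξ((3/2)^n − 1)`. -/
theorem newton_truncation_error (g ξ : ℝ) (hg : 0 < g) (hξ : 0 ≤ ξ) (n : ℕ)
    (y yt : ℕ → ℝ) (h0 : yt 0 = y 0)
    (hy : ∀ k < n, y (k + 1) = y k * (3 - (y k) ^ 2 * g) / 2)
    (hyt : ∀ k < n, |yt (k + 1) - yt k * (3 - (yt k) ^ 2 * g) / 2| ≤ ξ)
    (hyb : ∀ k ≤ n, 0 ≤ y k ∧ (y k) ^ 2 * g ≤ 2)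
    (hytb : ∀ k ≤ n, 0 ≤ yt k ∧ (yt k) ^ 2 * g ≤ 2) :
    |y n - yt n| ≤ 2 * ξ * ((3 / 2) ^ n - 1) := by
  induction n with
  | zero => simp [h0]
  | succ n ih =>
    have ih' := ih (fun k hk => hy k (hk.trans n.lt_succ_self))
      (fun k hk => hyt k (hk.trans n.lt_succ_self))
      (fun k hk => hyb k (hk.trans n.le_succ))
      (fun k hk => hytb k (hk.trans n.le_succ))
    have hyn := hy n n.lt_succ_self
    have hytn := hyt n n.lt_succ_self
    obtain ⟨hb1, hb2⟩ := hyb n n.le_succ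
    obtain ⟨hb3, hb4⟩ := hytb n n.le_succ
    have lip := newton_lipschitz g (y n) (yt n) hg hb1 hb2 hb3 hb4
    have tri : |y (n + 1) - yt (n + 1)| ≤
        |y n * (3 - (y n) ^ 2 * g) / 2 - yt n * (3 - (yt n) ^ 2 * g) / 2|
        + |yt (n + 1) - yt n * (3 - (yt n) ^ 2 * g) / 2| := by
      rw [hyn]
      calc _ = |(y n * (3 - (y n) ^ 2 * g) / 2 - yt n * (3 - (yt n) ^ 2 * g) / 2)
          - (yt (n + 1) - yt n * (3 - (yt n) ^ 2 * g) / 2)| := by ring_nf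
        _ ≤ _ := abs_sub _ _
    have hpow : (1:ℝ) ≤ (3 / 2) ^ n := one_le_pow₀ (by norm_num)
    calc |y (n + 1) - yt (n + 1)| ≤ 3 / 2 * |y n - yt n| + ξ := by linarith
      _ ≤ 3 / 2 * (2 * ξ * ((3 / 2) ^ n - 1)) + ξ := by nlinarith
      _ = 2 * ξ * ((3 / 2) ^ (n + 1) - 1) := by ring
end

section
/- Let g > 0 be real and let s = ⌊log₄ g + 1/2⌋ be the integer floor of the base-4 logarithm of g plus one half. Then the initial guess y₀ = 2^(−s) satisfies |2^(−s)·√g − 1| ≤ √2 − 1. In particular the initial relative error of Newton's method for g^{-1/2} started at y₀ = 2^(−s) is at most √2 − 1 < 1. -/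
/-- Initial-guess bound for Newton's method for the inverse square root: with
`s = ⌊log₄ g + 1/2⌋`, the initial guess `y₀ = 2^(−s)` has relative error
`|2^(−s)·√g − 1| ≤ √2 − 1`. -/
theorem newton_initial_guess_error (g : ℝ) (hg : 0 < g)
    (s : ℤ) (hs : s = ⌊Real.logb 4 g + 1 / 2⌋) :
    |(2 : ℝ) ^ (-s) * Real.sqrt g - 1| ≤ Real.sqrt 2 - 1 := by
  set L := Real.logb 4 g with hL
  have h1 : (s : ℝ) ≤ L + 1 / 2 := hs ▸ Int.floor_le _
  have h2 : L + 1 / 2 < (s : ℝ) + 1 := hs ▸ Int.lt_floor_add_one _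
  have h2pos : (0:ℝ) < 2 := by norm_num
  have hg4 : g = (4 : ℝ) ^ L := (Real.rpow_logb (by norm_num) (by norm_num) hg).symm
  have hsq : Real.sqrt g = (2 : ℝ) ^ L := by
    rw [Real.sqrt_eq_rpow, hg4, show (4:ℝ) = (2:ℝ) ^ (2:ℝ) by
      rw [show (2:ℝ)^(2:ℝ) = (2:ℝ)^((2:ℕ):ℝ) by norm_num, Real.rpow_natCast]; norm_num,
      ← Real.rpow_mul (le_of_lt h2pos), ← Real.rpow_mul (le_of_lt h2pos)]
    congr 1; ring
  have hzp : (2 : ℝ) ^ (-s) = (2 : ℝ) ^ ((-s : ℤ) : ℝ) := (Real.rpow_intCast 2 (-s)).symm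
  have hprod : (2 : ℝ) ^ (-s) * Real.sqrt g = (2 : ℝ) ^ (L - (s:ℝ)) := by
    rw [hzp, hsq, ← Real.rpow_add h2pos]
    push_cast
    ring_nf
  rw [hprod]
  have hs2 : Real.sqrt 2 = (2 : ℝ) ^ (1/2 : ℝ) := Real.sqrt_eq_rpow 2
  have ht1 : L - (s:ℝ) ≤ 1/2 := by linarith
  have ht2 : -(1/2) ≤ L - (s:ℝ) := by linarith
  have hup : (2 : ℝ) ^ (L - (s:ℝ)) ≤ Real.sqrt 2 := by
    rw [hs2]
    exact Real.rpow_le_rpow_of_exponent_le (by norm_num) ht1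
  have hlow : (2 : ℝ) ^ (-(1/2) : ℝ) ≤ (2 : ℝ) ^ (L - (s:ℝ)) :=
    Real.rpow_le_rpow_of_exponent_le (by norm_num) ht2
  have hneg : (2 : ℝ) ^ (-(1/2) : ℝ) = (Real.sqrt 2)⁻¹ := by
    rw [hs2, ← Real.rpow_neg_one, ← Real.rpow_mul (le_of_lt h2pos)]
    norm_num
  have hsqrt2 : Real.sqrt 2 ^ 2 = 2 := Real.sq_sqrt (by norm_num)
  have hsqrt2pos : (0:ℝ) < Real.sqrt 2 := Real.sqrt_pos.mpr (by norm_num)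
  have hinv : (Real.sqrt 2)⁻¹ * Real.sqrt 2 = 1 := inv_mul_cancel₀ hsqrt2pos.ne'
  have hkey : 2 - Real.sqrt 2 ≤ (Real.sqrt 2)⁻¹ := by
    nlinarith [hinv, hsqrt2pos, sq_nonneg (Real.sqrt 2 - 3/2), hsqrt2]
  rw [abs_le]
  constructor
  · have := hneg ▸ hlow
    nlinarith
  · linarith
end
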